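/- arXiv:2403.01337 — 2 statements merged into one kernel-verified Lean document; each statement's English description precedes it below -/
import Mathlib

section
/- Let k be a natural number and let Λ be a k-graph. Then the following are equivalent: (1) there exist a group G and an essential 1-cocycle c on Λ with values in G (i.e. a 1-cocycle whose restriction to each hom-set Hom(X, Y) is injective); (2) the canonical localization functor i : Λ ⥤ Π(Λ) is injective on morphisms. -/
open CategoryTheory

/-- A `k`-graph structure on a small category `Λ`. -/
structure KGraph (k : ℕ) (Λ : Type) [SmallCategory Λ] where
  d : ∀ {X Y : Λ}, (X ⟶ Y) → (Fin k → ℕ)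
  d_id : ∀ X : Λ, d (𝟙 X) = 0
  d_comp : ∀ {X Y Z : Λ} (f : X ⟶ Y) (g : Y ⟶ Z), d (f ≫ g) = d f + d g
  factorisation : ∀ {X Z : Λ} (f : X ⟶ Z) (m n : Fin k → ℕ), d f = m + n →
    ∃! t : Σ Y : Λ, (X ⟶ Y) × (Y ⟶ Z),
      d t.2.1 = m ∧ d t.2.2 = n ∧ t.2.1 ≫ t.2.2 = f

/-- A functor is injective on morphisms if the induced map on the total space of
morphisms is injective. -/
def InjectiveOnMorphisms {C : Type*} [Category C] {D : Type*} [Category D] (F : C ⥤ D) : Prop :=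
  Function.Injective
    (fun t : Σ X Y : C, X ⟶ Y => (⟨F.obj t.1, F.obj t.2.1, F.map t.2.2⟩ : Σ X Y : D, X ⟶ Y))

/-- A `1`-cocycle on `Λ` with values in a group `G`. -/
structure Cocycle (Λ : Type) [SmallCategory Λ] (G : Type) [Group G] where
  c : ∀ {X Y : Λ}, (X ⟶ Y) → G
  c_id : ∀ X : Λ, c (𝟙 X) = 1
  c_comp : ∀ {X Y Z : Λ} (f : X ⟶ Y) (g : Y ⟶ Z), c (f ≫ g) = c f * c g

/-- A cocycle is essential if its restriction to each hom-set is injective. -/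
def Cocycle.Essential {Λ : Type} [SmallCategory Λ] {G : Type} [Group G]
    (c : Cocycle Λ G) : Prop :=
  ∀ X Y : Λ, Function.Injective (fun f : X ⟶ Y => c.c f)

/-!
An essential cocycle is the same thing as a faithful functor from `Λ` to a one-object groupoid
`SingleObj G`. Such a functor inverts every morphism, so it factors through `Π(Λ)`, and
faithfulness passes to the localization functor `i`. Conversely, every groupoid embeds faithfully
into a one-object groupoid: transporting `f : x ⟶ y` along chosen morphisms `r ⟶ x`, `r ⟶ y`
gives an automorphism of `r` (the identity if `r` lies in another component), and the product of
these over all `r` already separates parallel morphisms in the coordinate `r = x`. Since `i` is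
bijective on objects, injectivity on morphisms is the same as faithfulness.
-/

theorem injectiveOnMorphisms_iff_faithful {C : Type*} [Category C] {D : Type*} [Category D]
    {F : C ⥤ D} (hF : Function.Injective F.obj) : InjectiveOnMorphisms F ↔ F.Faithful := by
  constructor
  · intro hinj
    refine ⟨fun {X Y} f f' h => ?_⟩
    have hsigma : (⟨X, Y, f⟩ : Σ X Y : C, X ⟶ Y) = ⟨X, Y, f'⟩ := hinj (by simp only [h])
    simpa using hsigma
  · rintro _ ⟨X, Y, f⟩ ⟨X', Y', f'⟩ h
    dsimp only at h
    obtain ⟨hX, h⟩ := Sigma.mk.inj_iff.mp h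
    obtain rfl := hF hX
    obtain ⟨hY, h⟩ := Sigma.mk.inj_iff.mp (eq_of_heq h)
    obtain rfl := hF hY
    rw [F.map_injective (eq_of_heq h)]

namespace Cocycle

variable {Λ : Type} [SmallCategory Λ] {G : Type} [Group G]

-- Composition in `SingleObj G` is reversed multiplication, hence the inverse.
def toFunctor (c : Cocycle Λ G) : Λ ⥤ SingleObj G where
  obj _ := SingleObj.star G
  map f := (c.c f)⁻¹
  map_id X := by rw [c.c_id, inv_one, SingleObj.id_as_one]
  map_comp f g := by rw [c.c_comp, mul_inv_rev, SingleObj.comp_as_mul]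

theorem faithful_toFunctor {c : Cocycle Λ G} (hc : c.Essential) : c.toFunctor.Faithful :=
  ⟨fun {X Y} _ _ h => hc X Y (inv_injective h)⟩

def ofFunctor (F : Λ ⥤ SingleObj G) : Cocycle Λ G where
  c f := (F.map f)⁻¹
  c_id X := by rw [F.map_id, SingleObj.id_as_one, inv_one]
  c_comp f g := by rw [F.map_comp, SingleObj.comp_as_mul, mul_inv_rev]

theorem essential_ofFunctor (F : Λ ⥤ SingleObj G) [F.Faithful] : (ofFunctor F).Essential :=
  fun _ _ _ _ h => F.map_injective (inv_injective h)

end Cocycle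

namespace IsGroupoid

variable {D : Type*} [Category D] [IsGroupoid D]

open Classical in
noncomputable def conjAut (r : D) {x y : D} (f : x ⟶ y) : r ≅ r :=
  if h : Nonempty (r ⟶ x) then
    asIso (h.some ≫ f ≫ inv (⟨h.some ≫ f⟩ : Nonempty (r ⟶ y)).some)
  else Iso.refl r

theorem conjAut_hom (r : D) {x y : D} (f : x ⟶ y) (h : Nonempty (r ⟶ x)) :
    (conjAut r f).hom = h.some ≫ f ≫ inv (⟨h.some ≫ f⟩ : Nonempty (r ⟶ y)).some := by
  rw [conjAut, dif_pos h, asIso_hom]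

theorem conjAut_of_isEmpty (r : D) {x y : D} (f : x ⟶ y) (h : IsEmpty (r ⟶ x)) :
    conjAut r f = Iso.refl r := by
  rw [conjAut, dif_neg (not_nonempty_iff.mpr h)]

theorem conjAut_id (r x : D) : conjAut r (𝟙 x) = Iso.refl r := by
  cases isEmpty_or_nonempty (r ⟶ x) with
  | inl h => exact conjAut_of_isEmpty r _ h
  | inr h => ext; simp [conjAut_hom r _ h]

theorem conjAut_comp (r : D) {x y z : D} (f : x ⟶ y) (g : y ⟶ z) :
    conjAut r (f ≫ g) = conjAut r f ≪≫ conjAut r g := by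
  cases isEmpty_or_nonempty (r ⟶ x) with
  | inl hx =>
    have hy : IsEmpty (r ⟶ y) := ⟨fun τ => hx.false (τ ≫ inv f)⟩
    rw [conjAut_of_isEmpty r _ hx, conjAut_of_isEmpty r _ hx, conjAut_of_isEmpty r _ hy,
      Iso.refl_trans]
  | inr hx =>
    ext
    rw [Iso.trans_hom, conjAut_hom r _ hx, conjAut_hom r _ hx,
      conjAut_hom r g ⟨hx.some ≫ f⟩]
    simp

theorem conjAut_self_injective (x y : D) :
    Function.Injective (conjAut x : (x ⟶ y) → (x ≅ x)) := by
  intro f f' h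
  have hhom := congrArg Iso.hom h
  rw [conjAut_hom x f ⟨𝟙 x⟩, conjAut_hom x f' ⟨𝟙 x⟩] at hhom
  rwa [cancel_epi, cancel_mono] at hhom

noncomputable def toSingleObjAut : D ⥤ SingleObj (∀ r : D, Aut r) where
  obj _ := SingleObj.star _
  map f r := conjAut r f
  map_id x := funext fun r => conjAut_id r x
  map_comp f g := funext fun r => conjAut_comp r f g

instance : (toSingleObjAut (D := D)).Faithful :=
  ⟨fun {x y} _ _ h => conjAut_self_injective x y (congrFun h x)⟩

end IsGroupoid

theorem essential_cocycle_iff_embeds_general (Λ : Type) [SmallCategory Λ] :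
    (∃ (G : GrpCat) (c : Cocycle Λ G), c.Essential) ↔
      InjectiveOnMorphisms (⊤ : MorphismProperty Λ).Q := by
  rw [injectiveOnMorphisms_iff_faithful (Localization.Construction.objEquiv ⊤).injective]
  constructor
  · rintro ⟨G, c, hc⟩
    have := c.faithful_toFunctor hc
    exact Functor.Faithful.of_comp_eq
      (Localization.Construction.fac c.toFunctor fun _ _ _ _ => inferInstance)
  · intro
    let E : Λ ⥤ SingleObj _ := (⊤ : MorphismProperty Λ).Q ⋙ IsGroupoid.toSingleObjAut
    exact ⟨GrpCat.of _, Cocycle.ofFunctor E, Cocycle.essential_ofFunctor E⟩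

/-- a `k`-graph admits an essential group-valued cocycle if and only if
the canonical functor to its fundamental groupoid is injective on morphisms. -/
theorem essential_cocycle_iff_embeds (k : ℕ) (Λ : Type) [SmallCategory Λ]
    (S : KGraph k Λ) :
    (∃ (G : GrpCat) (c : Cocycle Λ G), c.Essential) ↔
      InjectiveOnMorphisms (⊤ : MorphismProperty Λ).Q :=
  essential_cocycle_iff_embeds_general Λ
end

section
/- Let Γ_𝒯 be the A₂-tilde group of a finite projective plane (P, L) with bijection σ : P ≃ L and compatible triella 𝒯. For all x, y ∈ P with x ≠ y, there exists a unique pair (s, t) ∈ P × P with s ≠ t such that (a_x)⁻¹ · a_y = a_s · (a_t)⁻¹ in Γ_𝒯. -/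
/-!
Existence: if `σ l` is the line through `x` and `y` and `(l, x, s), (l, y, t) ∈ 𝒯`, the relations
`a_l a_x a_s = 1 = a_l a_y a_t` give `a_x⁻¹ a_y = a_s a_l · a_l⁻¹ a_t⁻¹ = a_s a_t⁻¹`.

Uniqueness: `Γ_𝒯` acts by left multiplication on the reduced words
`a_{x₁} ⋯ a_{x_m} a_{y₁}⁻¹ ⋯ a_{y_n}⁻¹`. Multiplying by `a_q` either lengthens the word or uses
`a_q a_{x₁} = a_z⁻¹`; multiplying by `a_q⁻¹` travels through the positive part by the moves
`a_q⁻¹ a_x = a_s a_t⁻¹` above. Words stay reduced because two lines meet in at most one point,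
and for `(p, x, z) ∈ 𝒯`, multiplying by `a_z⁻¹` and then by `a_p⁻¹` restores a word beginning
with `a_x`, one move at a time; this gives both the inverse laws and the relations. Finally
`a_s a_t⁻¹` sends the empty word to the word `([s], [t])`, which determines `s` and `t`.
-/

/-- The relations of the A₂-tilde group: `a_x a_y a_z = 1` for `(x, y, z) ∈ T`. -/
def A2Rels {P : Type} (T : Set (P × P × P)) : Set (FreeGroup P) :=
  (fun t : P × P × P => FreeGroup.of t.1 * FreeGroup.of t.2.1 * FreeGroup.of t.2.2) '' T

/-- The A₂-tilde group associated to a triella `T`. -/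
abbrev A2TildeGroup {P : Type} (T : Set (P × P × P)) : Type := PresentedGroup (A2Rels T)

/-- The generator `a_x` of the A₂-tilde group. -/
def a {P : Type} (T : Set (P × P × P)) (x : P) : A2TildeGroup T := PresentedGroup.of x

/-- `(xs, ys)` is a right normal form of `w`:
`w = a_{x₁} ⋯ a_{x_m} · a_{y₁}⁻¹ ⋯ a_{y_n}⁻¹` with `x_{i+1} ∉ σ x_i`, `y_j ∉ σ y_{j+1}`,
and `x_m ≠ y₁` when both lists are nonempty. -/
def IsRNF {P L : Type} [Membership P L] (σ : P ≃ L) (T : Set (P × P × P))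
    (w : A2TildeGroup T) (xs ys : List P) : Prop :=
  w = (xs.map fun x => a T x).prod * (ys.map fun y => (a T y)⁻¹).prod ∧
  List.Chain' (fun p q => q ∉ σ p) xs ∧
  List.Chain' (fun p q => p ∉ σ q) ys ∧
  (∀ x ∈ xs.getLast?, ∀ y ∈ ys.head?, x ≠ y)

/-- `(ts, ss)` is a left normal form of `w`:
`w = a_{t₁}⁻¹ ⋯ a_{t_n}⁻¹ · a_{s₁} ⋯ a_{s_m}` with `s_{i+1} ∉ σ s_i`, `t_j ∉ σ t_{j+1}`,
and the last entry of `ts` distinct from the first entry of `ss` when both are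
nonempty. -/
def IsLNF {P L : Type} [Membership P L] (σ : P ≃ L) (T : Set (P × P × P))
    (w : A2TildeGroup T) (ts ss : List P) : Prop :=
  w = (ts.map fun t => (a T t)⁻¹).prod * (ss.map fun s => a T s).prod ∧
  List.Chain' (fun p q => q ∉ σ p) ss ∧
  List.Chain' (fun p q => p ∉ σ q) ts ∧
  (∀ t ∈ ts.getLast?, ∀ s ∈ ss.head?, t ≠ s)

/-- The evaluation of a letter: `(x, true)` is the generator `a_x` and `(x, false)` its
inverse. -/
def letterEval {P : Type} (T : Set (P × P × P)) (pb : P × Bool) : A2TildeGroup T :=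
  if pb.2 then a T pb.1 else (a T pb.1)⁻¹

open Configuration

namespace A2Tilde

variable {P L : Type} [Membership P L]

structure IsTriella (σ : P ≃ L) (T : Set (P × P × P)) : Prop where
  exists_iff_mem : ∀ x y : P, (∃ z, (x, y, z) ∈ T) ↔ y ∈ σ x
  rotate : ∀ {x y z : P}, (x, y, z) ∈ T → (y, z, x) ∈ T
  unique : ∀ {x y z z' : P}, (x, y, z) ∈ T → (x, y, z') ∈ T → z = z'

variable {σ : P ≃ L} {T : Set (P × P × P)}

namespace IsTriella

lemma mem₁₂ (hT : IsTriella σ T) {x y z : P} (h : (x, y, z) ∈ T) : y ∈ σ x :=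
  (hT.exists_iff_mem x y).mp ⟨z, h⟩

lemma mem₂₃ (hT : IsTriella σ T) {x y z : P} (h : (x, y, z) ∈ T) : z ∈ σ y :=
  hT.mem₁₂ (hT.rotate h)

lemma mem₃₁ (hT : IsTriella σ T) {x y z : P} (h : (x, y, z) ∈ T) : x ∈ σ z :=
  hT.mem₂₃ (hT.rotate h)

end IsTriella

open scoped Classical in
noncomputable def third (T : Set (P × P × P)) (x y : P) : P :=
  if h : ∃ z, (x, y, z) ∈ T then h.choose else x

lemma IsTriella.mem_third (hT : IsTriella σ T) {x y : P} (h : y ∈ σ x) :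
    (x, y, third T x y) ∈ T := by
  have hex := (hT.exists_iff_mem x y).mpr h
  rw [third, dif_pos hex]
  exact hex.choose_spec

lemma IsTriella.third_eq (hT : IsTriella σ T) {x y z : P} (h : (x, y, z) ∈ T) :
    third T x y = z :=
  hT.unique (hT.mem_third (hT.mem₁₂ h)) h

lemma eq_of_mem_of_mem [Nondegenerate P L] {p q c d : P} (hpq : p ≠ q) (hcp : c ∈ σ p)
    (hcq : c ∈ σ q) (hdp : d ∈ σ p) (hdq : d ∈ σ q) : c = d :=
  (Nondegenerate.eq_or_eq hcp hdp hcq hdq).resolve_right (σ.injective.ne hpq)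

section Diamond

variable [HasLines P L]

open scoped Classical in
noncomputable def pole (σ : P ≃ L) (q x : P) : P :=
  if h : q ≠ x then σ.symm (HasLines.mkLine h) else q

lemma mem_pole_left {q x : P} (h : q ≠ x) : q ∈ σ (pole σ q x) := by
  rw [pole, dif_pos h, Equiv.apply_symm_apply]
  exact (HasLines.mkLine_ax h).1

lemma mem_pole_right {q x : P} (h : q ≠ x) : x ∈ σ (pole σ q x) := by
  rw [pole, dif_pos h, Equiv.apply_symm_apply]
  exact (HasLines.mkLine_ax h).2

/-- The move `a_q⁻¹ a_x = a_s a_t⁻¹` for `(s, t) = diamond σ T q x` (`inv_mul_eq_diamond`). -/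
noncomputable def diamond (σ : P ≃ L) (T : Set (P × P × P)) (q x : P) : P × P :=
  (third T (pole σ q x) q, third T (pole σ q x) x)

variable {q x : P}

lemma diamond_fst_mem (hT : IsTriella σ T) (h : q ≠ x) :
    (pole σ q x, q, (diamond σ T q x).1) ∈ T :=
  hT.mem_third (mem_pole_left h)

lemma diamond_snd_mem (hT : IsTriella σ T) (h : q ≠ x) :
    (pole σ q x, x, (diamond σ T q x).2) ∈ T :=
  hT.mem_third (mem_pole_right h)

lemma diamond_fst_ne_snd (hT : IsTriella σ T) (h : q ≠ x) :
    (diamond σ T q x).1 ≠ (diamond σ T q x).2 := by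
  intro he
  have hq := hT.rotate (hT.rotate (diamond_fst_mem hT h))
  have hx := hT.rotate (hT.rotate (diamond_snd_mem hT h))
  rw [he] at hq
  exact h (hT.unique hq hx)

lemma diamond_snd_ne (hT : IsTriella σ T) (h : q ≠ x) {y : P} (hy : y ∉ σ x) :
    (diamond σ T q x).2 ≠ y := by
  rintro rfl
  exact hy (hT.mem₂₃ (diamond_snd_mem hT h))

lemma diamond_eq_of_mem (hT : IsTriella σ T) {l p s w u : P} (hp : (l, p, w) ∈ T)
    (hs : (l, s, u) ∈ T) (hps : p ≠ s) : diamond σ T p s = (w, u) := by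
  have hl : pole σ p s = l := σ.injective <|
    (Nondegenerate.eq_or_eq (mem_pole_left hps) (mem_pole_right hps) (hT.mem₁₂ hp)
      (hT.mem₁₂ hs)).resolve_left hps
  rw [diamond, hl, hT.third_eq hp, hT.third_eq hs]

/-- The lines `σ s` and `σ t` of `(s, t) = diamond σ T q x` meet in `pole σ q x`, and the triple
of `T` starting with `t, pole σ q x` ends in `x`. -/
lemma not_mem_diamond_fst (hT : IsTriella σ T) (h : q ≠ x) {c w : P}
    (hc : ((diamond σ T q x).2, c, w) ∈ T) (hw : w ≠ x) : c ∉ σ (diamond σ T q x).1 := by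
  intro hcs
  have hcl : c = pole σ q x :=
    eq_of_mem_of_mem (diamond_fst_ne_snd hT h) hcs (hT.mem₁₂ hc)
      (hT.mem₃₁ (diamond_fst_mem hT h)) (hT.mem₃₁ (diamond_snd_mem hT h))
  rw [hcl] at hc
  exact hw (hT.unique hc (hT.rotate (hT.rotate (diamond_snd_mem hT h))))

end Diamond

lemma a_mul_a_mul_a_eq_one {x y z : P} (h : (x, y, z) ∈ T) : a T x * a T y * a T z = 1 := by
  change PresentedGroup.mk (A2Rels T) (FreeGroup.of x * FreeGroup.of y * FreeGroup.of z) = 1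
  exact (QuotientGroup.eq_one_iff _).mpr (Subgroup.subset_normalClosure ⟨(x, y, z), h, rfl⟩)

lemma inv_mul_eq_of_mem {l p w s u : P} (hp : (l, p, w) ∈ T) (hs : (l, s, u) ∈ T) :
    (a T p)⁻¹ * a T s = a T w * (a T u)⁻¹ := by
  have hw : a T w = (a T l * a T p)⁻¹ := eq_inv_of_mul_eq_one_right (a_mul_a_mul_a_eq_one hp)
  calc (a T p)⁻¹ * a T s = (a T p)⁻¹ * (a T l)⁻¹ * (a T l * a T s * a T u) * (a T u)⁻¹ := by
        group
    _ = a T w * (a T u)⁻¹ := by rw [a_mul_a_mul_a_eq_one hs, hw]; group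

lemma inv_mul_eq_diamond [HasLines P L] (hT : IsTriella σ T) {q x : P} (h : q ≠ x) :
    (a T q)⁻¹ * a T x = a T (diamond σ T q x).1 * (a T (diamond σ T q x).2)⁻¹ :=
  inv_mul_eq_of_mem (diamond_fst_mem hT h) (diamond_snd_mem hT h)

section NormalForm

/-- The pair `(xs, ys)` stands for the word `a_{x₁} ⋯ a_{x_m} a_{y₁}⁻¹ ⋯ a_{y_n}⁻¹`. -/
structure IsReduced (σ : P ≃ L) (w : List P × List P) : Prop where
  isChain_fst : w.1.IsChain (fun p q => q ∉ σ p)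
  isChain_snd : w.2.IsChain (fun p q => p ∉ σ q)
  getLast_ne_head : ∀ x ∈ w.1.getLast?, ∀ y ∈ w.2.head?, x ≠ y

lemma IsReduced.tail {x : P} {xs ys : List P} (h : IsReduced σ (x :: xs, ys)) :
    IsReduced σ (xs, ys) := by
  refine ⟨h.isChain_fst.tail, h.isChain_snd, fun w hw => h.getLast_ne_head w ?_⟩
  cases xs with
  | nil => simp at hw
  | cons b l => rwa [List.getLast?_cons_cons]

lemma IsReduced.cons {s : P} {w : List P × List P} (h : IsReduced σ w)
    (h₁ : ∀ c ∈ w.1.head?, c ∉ σ s) (h₂ : w.1 = [] → ∀ y ∈ w.2.head?, s ≠ y) :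
    IsReduced σ (Prod.map (s :: ·) id w) := by
  obtain ⟨_ | ⟨c, xs⟩, ys⟩ := w
  · exact ⟨List.isChain_singleton s, h.isChain_snd, by simpa using h₂ rfl⟩
  · refine ⟨List.isChain_cons_cons.mpr ⟨h₁ c rfl, h.isChain_fst⟩, h.isChain_snd, ?_⟩
    simpa only [Prod.map, id, List.getLast?_cons_cons] using h.getLast_ne_head

variable [HasLines P L]

open scoped Classical in
noncomputable def mulInvGen (σ : P ≃ L) (T : Set (P × P × P)) (q : P) :
    List P × List P → List P × List P
  | ([], []) => ([], [q])
  | ([], y :: ys) => if q ∈ σ y then ([third T y q], ys) else ([], q :: y :: ys)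
  | (x :: xs, ys) =>
    if q = x then (xs, ys)
    else Prod.map ((diamond σ T q x).1 :: ·) id (mulInvGen σ T (diamond σ T q x).2 (xs, ys))

open scoped Classical in
noncomputable def mulGen (σ : P ≃ L) (T : Set (P × P × P)) (q : P) :
    List P × List P → List P × List P
  | ([], []) => ([q], [])
  | ([], y :: ys) => if q = y then ([], ys) else ([q], y :: ys)
  | (x :: xs, ys) => if x ∈ σ q then mulInvGen σ T (third T q x) (xs, ys) else (q :: x :: xs, ys)

lemma mulInvGen_nil_eq {p : P} {ys : List P} (h : (p :: ys).IsChain (fun p q => p ∉ σ q)) :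
    mulInvGen σ T p ([], ys) = ([], p :: ys) := by
  cases ys with
  | nil => rw [mulInvGen]
  | cons y ys => rw [mulInvGen, if_neg (List.isChain_cons_cons.mp h).1]

lemma mulInvGen_map_cons_of_ne {p x : P} {w : List P × List P} (h : p ≠ x) :
    mulInvGen σ T p (Prod.map (x :: ·) id w) =
      Prod.map ((diamond σ T p x).1 :: ·) id (mulInvGen σ T (diamond σ T p x).2 w) := by
  change mulInvGen σ T p (x :: w.1, w.2) = _
  rw [mulInvGen, if_neg h]

lemma mulInvGen_cons_of_ne {p x : P} {xs ys : List P} (h : p ≠ x) :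
    mulInvGen σ T p (x :: xs, ys) =
      Prod.map ((diamond σ T p x).1 :: ·) id (mulInvGen σ T (diamond σ T p x).2 (xs, ys)) :=
  mulInvGen_map_cons_of_ne (w := (xs, ys)) h

lemma mulGen_map_cons_of_mem {q x : P} {w : List P × List P} (h : x ∈ σ q) :
    mulGen σ T q (Prod.map (x :: ·) id w) = mulInvGen σ T (third T q x) w := by
  change mulGen σ T q (x :: w.1, w.2) = _
  rw [mulGen, if_pos h]

lemma mulGen_eq_cons {q : P} {w : List P × List P} (h : IsReduced σ (Prod.map (q :: ·) id w)) :
    mulGen σ T q w = Prod.map (q :: ·) id w := by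
  obtain ⟨_ | ⟨x, xs⟩, _ | ⟨y, ys⟩⟩ := w
  · rw [mulGen]; rfl
  · rw [mulGen, if_neg (h.getLast_ne_head q rfl y rfl)]; rfl
  all_goals rw [mulGen, if_neg (List.isChain_cons_cons.mp h.isChain_fst).1]; rfl

lemma isReduced_mulInvGen_nil (hT : IsTriella σ T) {p : P} {ys : List P}
    (h : IsReduced σ ([], ys)) : IsReduced σ (mulInvGen σ T p ([], ys)) := by
  cases ys with
  | nil => rw [mulInvGen]; exact ⟨List.isChain_nil, List.isChain_singleton p, by simp⟩
  | cons y ys =>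
    rw [mulInvGen]
    split_ifs with hp
    · refine ⟨List.isChain_singleton _, h.isChain_snd.tail, ?_⟩
      cases ys with
      | nil => simp
      | cons y₂ ys =>
        simp only [List.getLast?_singleton, List.head?_cons, Option.mem_def, Option.some.injEq]
        rintro c rfl _ rfl hc
        rw [← hc] at h
        exact (List.isChain_cons_cons.mp h.isChain_snd).1 (hT.mem₃₁ (hT.mem_third hp))
    · exact ⟨List.isChain_nil, List.isChain_cons_cons.mpr ⟨hp, h.isChain_snd⟩, by simp⟩

lemma isReduced_mulInvGen_cons (hT : IsTriella σ T) {p x : P} {xs ys : List P}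
    (h : IsReduced σ (x :: xs, ys)) (hpx : p ≠ x) :
    IsReduced σ (mulInvGen σ T p (x :: xs, ys)) := by
  induction xs generalizing p x ys with
  | nil =>
    rw [mulInvGen_cons_of_ne hpx]
    refine (isReduced_mulInvGen_nil hT h.tail).cons ?_ ?_
    · cases ys with
      | nil => simp [mulInvGen]
      | cons y ys =>
        rw [mulInvGen]
        split_ifs with ht
        · simp only [List.head?_cons, Option.mem_def, Option.some.injEq]
          rintro c rfl
          exact not_mem_diamond_fst hT hpx (hT.rotate (hT.mem_third ht))
            (h.getLast_ne_head x rfl y rfl).symm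
        · simp
    · cases ys with
      | nil => simpa [mulInvGen] using diamond_fst_ne_snd hT hpx
      | cons y ys =>
        rw [mulInvGen]
        split_ifs with ht
        · simp
        · simpa using diamond_fst_ne_snd hT hpx
  | cons x₂ xs ih =>
    have hx₂ : x₂ ∉ σ x := (List.isChain_cons_cons.mp h.isChain_fst).1
    have ht := diamond_snd_ne hT hpx hx₂
    rw [mulInvGen_cons_of_ne hpx]
    refine (ih h.tail ht).cons ?_ (by simp [mulInvGen_cons_of_ne ht])
    simp only [mulInvGen_cons_of_ne ht, Prod.map_fst, List.head?_cons, Option.mem_def,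
      Option.some.injEq]
    rintro c rfl
    refine not_mem_diamond_fst hT hpx (hT.rotate (diamond_fst_mem hT ht)) ?_
    intro hl
    exact hx₂ (hl ▸ mem_pole_right ht)

lemma isReduced_mulInvGen (hT : IsTriella σ T) {p : P} {w : List P × List P}
    (h : IsReduced σ w) : IsReduced σ (mulInvGen σ T p w) := by
  obtain ⟨_ | ⟨x, xs⟩, ys⟩ := w
  · exact isReduced_mulInvGen_nil hT h
  · by_cases hpx : p = x
    · rw [mulInvGen, if_pos hpx]
      exact h.tail
    · exact isReduced_mulInvGen_cons hT h hpx

lemma isReduced_mulGen (hT : IsTriella σ T) {q : P} {w : List P × List P}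
    (h : IsReduced σ w) : IsReduced σ (mulGen σ T q w) := by
  obtain ⟨_ | ⟨x, xs⟩, _ | ⟨y, ys⟩⟩ := w
  · rw [mulGen]
    exact ⟨List.isChain_singleton q, List.isChain_nil, by simp⟩
  · rw [mulGen]
    split_ifs with hqy
    · exact ⟨List.isChain_nil, h.isChain_snd.tail, by simp⟩
    · exact ⟨List.isChain_singleton q, h.isChain_snd, by simpa using hqy⟩
  all_goals
    rw [mulGen]
    split_ifs with hx
    · exact isReduced_mulInvGen hT h.tail
    · exact h.cons (by simpa using hx) (by simp)

lemma mulInvGen_mulInvGen (hT : IsTriella σ T) {p x z : P} {xs ys : List P}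
    (hpxz : (p, x, z) ∈ T) (h : IsReduced σ (x :: xs, ys)) :
    mulInvGen σ T p (mulInvGen σ T z (xs, ys)) = (x :: xs, ys) := by
  induction xs generalizing p x z ys with
  | nil =>
    have hpz : p ∈ σ z := hT.mem₃₁ hpxz
    have hzpx : (z, p, x) ∈ T := hT.rotate (hT.rotate hpxz)
    cases ys with
    | nil => rw [mulInvGen, mulInvGen, if_pos hpz, hT.third_eq hzpx]
    | cons y ys =>
      rw [mulInvGen]
      split_ifs with hz
      · have hc : (z, third T y z, y) ∈ T := hT.rotate (hT.mem_third hz)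
        have hpc : p ≠ third T y z := by
          intro he
          rw [← he] at hc
          exact h.getLast_ne_head x rfl y rfl (hT.unique hzpx hc)
        rw [mulInvGen_cons_of_ne hpc, diamond_eq_of_mem hT hzpx hc hpc,
          mulInvGen_nil_eq h.isChain_snd]
        rfl
      · rw [mulInvGen, if_pos hpz, hT.third_eq hzpx]
  | cons x₂ xs ih =>
    have hx₂ : x₂ ∉ σ x := (List.isChain_cons_cons.mp h.isChain_fst).1
    have hzx₂ : z ≠ x₂ := by
      rintro rfl
      exact hx₂ (hT.mem₂₃ hpxz)
    have hzpx : (z, p, x) ∈ T := hT.rotate (hT.rotate hpxz)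
    have hs := hT.rotate (diamond_fst_mem hT hzx₂)
    have hps : p ≠ (diamond σ T z x₂).1 := by
      intro he
      rw [← he] at hs
      exact hx₂ (hT.unique hzpx hs ▸ mem_pole_right hzx₂)
    rw [mulInvGen_cons_of_ne hzx₂, mulInvGen_map_cons_of_ne hps, diamond_eq_of_mem hT hzpx hs hps,
      ih (diamond_snd_mem hT hzx₂) h.tail]
    rfl

lemma mulInvGen_mulGen (hT : IsTriella σ T) {p : P} {w : List P × List P}
    (h : IsReduced σ w) : mulInvGen σ T p (mulGen σ T p w) = w := by
  obtain ⟨_ | ⟨x, xs⟩, _ | ⟨y, ys⟩⟩ := w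
  · rw [mulGen, mulInvGen, if_pos rfl]
  · rw [mulGen]
    split_ifs with hpy
    · rw [hpy, mulInvGen_nil_eq h.isChain_snd]
    · rw [mulInvGen, if_pos rfl]
  all_goals
    rw [mulGen]
    split_ifs with hx
    · exact mulInvGen_mulInvGen hT (hT.mem_third hx) h
    · rw [mulInvGen, if_pos rfl]

lemma mulGen_mulInvGen (hT : IsTriella σ T) {p : P} {w : List P × List P}
    (h : IsReduced σ w) : mulGen σ T p (mulInvGen σ T p w) = w := by
  obtain ⟨_ | ⟨x, xs⟩, _ | ⟨y, ys⟩⟩ := w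
  · rw [mulInvGen, mulGen, if_pos rfl]
  · rw [mulInvGen]
    split_ifs with hp
    · have hc := hT.rotate (hT.mem_third hp)
      rw [mulGen, if_pos (hT.mem₁₂ hc), hT.third_eq hc, mulInvGen_nil_eq h.isChain_snd]
    · rw [mulGen, if_pos rfl]
  all_goals
    by_cases hpx : p = x
    · rw [mulInvGen, if_pos hpx, hpx]
      exact mulGen_eq_cons h
    · rw [mulInvGen_cons_of_ne hpx, mulGen_map_cons_of_mem (hT.mem₂₃ (diamond_fst_mem hT hpx)),
        hT.third_eq (hT.rotate (diamond_fst_mem hT hpx))]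
      exact mulInvGen_mulInvGen hT (diamond_snd_mem hT hpx) h

lemma mulGen_mulGen (hT : IsTriella σ T) {x y z : P} {w : List P × List P}
    (hxyz : (x, y, z) ∈ T) (h : IsReduced σ w) :
    mulGen σ T x (mulGen σ T y w) = mulInvGen σ T z w := by
  have hyx : y ∈ σ x := hT.mem₁₂ hxyz
  have hz : third T x y = z := hT.third_eq hxyz
  obtain ⟨_ | ⟨w₁, xs⟩, _ | ⟨y₁, ys⟩⟩ := w
  · rw [mulGen, mulGen, if_pos hyx, hz]
  · rw [mulGen]
    split_ifs with hyy
    · subst hyy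
      rw [mulInvGen, if_pos (hT.mem₂₃ hxyz), hT.third_eq (hT.rotate hxyz)]
      refine mulGen_eq_cons (w := ([], ys)) ⟨List.isChain_singleton x, h.isChain_snd.tail, ?_⟩
      simp only [Prod.map, List.getLast?_singleton, Option.mem_def, Option.some.injEq, id]
      rintro _ rfl y₂ hy₂ rfl
      exact h.isChain_snd.rel_head? hy₂ hyx
    · rw [mulGen, if_pos hyx, hz]
  all_goals
    rw [mulGen]
    split_ifs with hw
    · by_cases hzw : z = w₁
      · rw [← hzw, hT.third_eq (hT.rotate hxyz), mulInvGen, if_pos rfl]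
        exact mulGen_mulInvGen hT h.tail
      · have hd := diamond_eq_of_mem hT (hT.rotate hxyz) (hT.mem_third hw) hzw
        have hred := isReduced_mulInvGen hT (p := z) h
        rw [mulInvGen_cons_of_ne hzw, hd] at hred ⊢
        exact mulGen_eq_cons hred
    · rw [mulGen, if_pos hyx, hz]

end NormalForm

section Action

variable [HasLines P L]

noncomputable def genPerm (hT : IsTriella σ T) (q : P) :
    Equiv.Perm {w : List P × List P // IsReduced σ w} where
  toFun w := ⟨mulGen σ T q w, isReduced_mulGen hT w.2⟩
  invFun w := ⟨mulInvGen σ T q w, isReduced_mulInvGen hT w.2⟩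
  left_inv w := Subtype.ext (mulInvGen_mulGen hT w.2)
  right_inv w := Subtype.ext (mulGen_mulInvGen hT w.2)

noncomputable def toPerm (hT : IsTriella σ T) :
    A2TildeGroup T →* Equiv.Perm {w : List P × List P // IsReduced σ w} :=
  PresentedGroup.toGroup (f := genPerm hT) <| by
    rintro _ ⟨⟨x, y, z⟩, hxyz, rfl⟩
    ext w : 2
    change mulGen σ T x (mulGen σ T y (mulGen σ T z w.1)) = w.1
    rw [mulGen_mulGen hT hxyz (isReduced_mulGen hT w.2), mulInvGen_mulGen hT w.2]

lemma toPerm_mul_inv_apply_nil (hT : IsTriella σ T) {s t : P} (hst : s ≠ t) :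
    (toPerm hT (a T s * (a T t)⁻¹) ⟨([], []), List.isChain_nil, List.isChain_nil, by simp⟩).1 =
      ([s], [t]) := by
  rw [map_mul, map_inv, toPerm, a, PresentedGroup.toGroup.of, a, PresentedGroup.toGroup.of]
  change mulGen σ T s (mulInvGen σ T t ([], [])) = _
  rw [mulInvGen, mulGen, if_neg hst]

lemma eq_of_mul_inv_eq (hT : IsTriella σ T) {s t s' t' : P} (hst : s ≠ t) (hst' : s' ≠ t')
    (h : a T s * (a T t)⁻¹ = a T s' * (a T t')⁻¹) : (s, t) = (s', t') := by
  have hw := toPerm_mul_inv_apply_nil hT hst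
  rw [h, toPerm_mul_inv_apply_nil hT hst'] at hw
  simp only [Prod.mk.injEq, List.cons.injEq, and_true] at hw
  rw [hw.1, hw.2]

end Action

end A2Tilde

theorem a2_diamond_general (P L : Type) [Membership P L]
    [Configuration.ProjectivePlane P L] (σ : P ≃ L) (T : Set (P × P × P))
    (hT1 : ∀ x y : P, (∃ z, (x, y, z) ∈ T) ↔ y ∈ σ x)
    (hT2 : ∀ x y z : P, (x, y, z) ∈ T → (y, z, x) ∈ T)
    (hT3 : ∀ x y z z' : P, (x, y, z) ∈ T → (x, y, z') ∈ T → z = z')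
    (x y : P) (hxy : x ≠ y) :
    ∃! st : P × P, st.1 ≠ st.2 ∧ (a T x)⁻¹ * a T y = a T st.1 * (a T st.2)⁻¹ := by
  have hT : A2Tilde.IsTriella σ T := ⟨hT1, hT2 _ _ _, hT3 _ _ _ _⟩
  have hd := A2Tilde.diamond_fst_ne_snd hT hxy
  refine ⟨A2Tilde.diamond σ T x y, ⟨hd, A2Tilde.inv_mul_eq_diamond hT hxy⟩, ?_⟩
  rintro ⟨s, t⟩ ⟨hst, h⟩
  exact A2Tilde.eq_of_mul_inv_eq hT hst hd (h.symm.trans (A2Tilde.inv_mul_eq_diamond hT hxy))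

/-- in an A₂-tilde group, for distinct generators the element
`a_x⁻¹ · a_y` can be rewritten uniquely as `a_s · a_t⁻¹` with `s ≠ t`. -/
theorem a2_diamond (P L : Type) [Fintype P] [Fintype L] [Membership P L]
    [Configuration.ProjectivePlane P L] (σ : P ≃ L) (T : Set (P × P × P))
    (hT1 : ∀ x y : P, (∃ z, (x, y, z) ∈ T) ↔ y ∈ σ x)
    (hT2 : ∀ x y z : P, (x, y, z) ∈ T → (y, z, x) ∈ T)
    (hT3 : ∀ x y z z' : P, (x, y, z) ∈ T → (x, y, z') ∈ T → z = z')
    (x y : P) (hxy : x ≠ y) :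
    ∃! st : P × P, st.1 ≠ st.2 ∧ (a T x)⁻¹ * a T y = a T st.1 * (a T st.2)⁻¹ :=
  a2_diamond_general P L σ T hT1 hT2 hT3 x y hxy
end
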